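/- arXiv:2005.03387 — 10 statements merged into one kernel-verified Lean document; each statement's English description precedes it below -/
import Mathlib

section
/- Let R be a commutative elementary divisor ring and let A be a full nonsingular 2×2 matrix over R (i.e. det A ≠ 0 and the two-sided ideal of the matrix ring R^{2×2} generated by A is all of R^{2×2}). Then there exist invertible matrices P, Q ∈ GL_2(R) such that P·A·Q is a nontrivial clear element of the ring R^{2×2}, i.e. P·A·Q = r + u where u is a unit of R^{2×2} and r is a unit-regular element of R^{2×2} with r ≠ 0 and r not a unit. -/
/-- An element `r` of a ring is unit-regular if `r = r * u * r` for some unit `u`. -/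
def IsUnitRegular {R : Type*} [Ring R] (r : R) : Prop :=
  ∃ u : R, IsUnit u ∧ r * u * r = r

/-- An element is clear if it is the sum of a unit-regular element and a unit. -/
def IsClearElem {R : Type*} [Ring R] (a : R) : Prop :=
  ∃ r u : R, IsUnitRegular r ∧ IsUnit u ∧ a = r + u

/-- A ring is clear if every element is clear. -/
def IsClearRing (R : Type*) [Ring R] : Prop :=
  ∀ a : R, IsClearElem a

/-- A clear element is nontrivial if the unit-regular summand is nonzero and not a unit. -/
def IsNontrivialClearElem {R : Type*} [Ring R] (a : R) : Prop :=
  ∃ r u : R, IsUnitRegular r ∧ IsUnit u ∧ a = r + u ∧ r ≠ 0 ∧ ¬ IsUnit r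

/-- A square matrix is full if the two-sided ideal it generates is the whole matrix ring. -/
def Matrix.IsFull {R : Type*} [Ring R] {n : ℕ} (A : Matrix (Fin n) (Fin n) R) : Prop :=
  TwoSidedIdeal.span {A} = ⊤

/-- A commutative ring is an elementary divisor ring if every rectangular matrix admits
diagonal reduction with successive divisibility of the diagonal entries. -/
def IsElementaryDivisorRing (R : Type*) [CommRing R] : Prop :=
  ∀ (m n : ℕ) (A : Matrix (Fin m) (Fin n) R),
    ∃ (P : Matrix (Fin m) (Fin m) R) (Q : Matrix (Fin n) (Fin n) R),
      IsUnit P ∧ IsUnit Q ∧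
      (∀ (i : Fin m) (j : Fin n), (i : ℕ) ≠ (j : ℕ) → (P * A * Q) i j = 0) ∧
      (∀ (k : ℕ) (h1 : k < m) (h2 : k < n) (h3 : k + 1 < m) (h4 : k + 1 < n),
        (P * A * Q) ⟨k, h1⟩ ⟨k, h2⟩ ∣ (P * A * Q) ⟨k + 1, h3⟩ ⟨k + 1, h4⟩)


/-!
Diagonalize `A` as `P * A * Q = diag(a, b)` with `a ∣ b`. Multiplying by units preserves fullness,
and reducing modulo `(a)` kills `diag(a, b)`, so fullness forces `a` to be a unit. Elementary
operations then turn `diag(a, b)` into `!![1, 1; 1, 1 + b]`, which is the idempotent `e₁₁` plus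
`!![0, 1; 1, 1 + b]`, a matrix of determinant `-1`.
-/

theorem IsIdempotentElem.isUnitRegular {R : Type*} [Ring R] {e : R} (he : IsIdempotentElem e) :
    IsUnitRegular e :=
  ⟨1, isUnit_one, by rw [mul_one, he.eq]⟩

namespace Matrix

variable {R : Type*}

theorem IsFull.isUnit_mul_mul [Ring R] {n : ℕ} {A P Q : Matrix (Fin n) (Fin n) R}
    (hA : A.IsFull) (hP : IsUnit P) (hQ : IsUnit Q) : (P * A * Q).IsFull := by
  obtain ⟨P, rfl⟩ := hP
  obtain ⟨Q, rfl⟩ := hQ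
  have hmem : A ∈ TwoSidedIdeal.span {(P : Matrix (Fin n) (Fin n) R) * A * Q} := by
    have h := TwoSidedIdeal.mul_mem_right _ _ (↑Q⁻¹ : Matrix (Fin n) (Fin n) R)
      (TwoSidedIdeal.mul_mem_left _ (↑P⁻¹ : Matrix (Fin n) (Fin n) R) _
        (TwoSidedIdeal.subset_span (Set.mem_singleton ((P : Matrix (Fin n) (Fin n) R) * A * Q))))
    simpa [mul_assoc] using h
  exact top_le_iff.mp (hA ▸ (TwoSidedIdeal.span_le.mpr (Set.singleton_subset_iff.mpr hmem)))

theorem IsFull.map_one_eq_zero [Ring R] {S : Type*} [Ring S] {n : ℕ}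
    {A : Matrix (Fin n) (Fin n) R} (hA : A.IsFull) (f : Matrix (Fin n) (Fin n) R →+* S)
    (hf : f A = 0) : f 1 = 0 := by
  have hker : TwoSidedIdeal.span {A} ≤ TwoSidedIdeal.ker f :=
    TwoSidedIdeal.span_le.mpr (Set.singleton_subset_iff.mpr ((TwoSidedIdeal.mem_ker f).mpr hf))
  rw [hA, top_le_iff] at hker
  exact (TwoSidedIdeal.mem_ker f).mp (hker ▸ TwoSidedIdeal.mem_top _)

theorem IsFull.isUnit_of_dvd [CommRing R] {n : ℕ} [NeZero n] {D : Matrix (Fin n) (Fin n) R}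
    (hD : D.IsFull) {a : R} (ha : ∀ i j, a ∣ D i j) : IsUnit a := by
  let π := Ideal.Quotient.mk (Ideal.span {a})
  have hπD : π.mapMatrix D = 0 := by
    ext i j
    exact Ideal.Quotient.eq_zero_iff_mem.mpr (Ideal.mem_span_singleton.mpr (ha i j))
  have h1 : π 1 = 0 := by
    simpa using congrFun (congrFun (hD.map_one_eq_zero π.mapMatrix hπD) 0) 0
  exact Ideal.span_singleton_eq_top.mp
    ((Ideal.eq_top_iff_one _).mpr (Ideal.Quotient.eq_zero_iff_mem.mp h1))

end Matrix

theorem isNontrivialClearElem_one_one_one_add {R : Type*} [CommRing R] [Nontrivial R] (b : R) :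
    IsNontrivialClearElem !![1, 1; 1, 1 + b] := by
  refine ⟨!![1, 0; 0, 0], !![0, 1; 1, 1 + b], ?_, ?_, ?_, ?_, ?_⟩
  · refine IsIdempotentElem.isUnitRegular ?_
    ext i j; fin_cases i <;> fin_cases j <;> simp
  · simp [Matrix.isUnit_iff_isUnit_det, Matrix.det_fin_two_of]
  · ext i j; fin_cases i <;> fin_cases j <;> simp
  · intro h; simpa using congrFun (congrFun h 0) 0
  · simp [Matrix.isUnit_iff_isUnit_det, Matrix.det_fin_two_of]

theorem exists_isUnit_mul_diagonal_mul_eq {R : Type*} [CommRing R] (u : Rˣ) (b : R) :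
    ∃ P Q : Matrix (Fin 2) (Fin 2) R, IsUnit P ∧ IsUnit Q ∧
      P * !![(u : R), 0; 0, b] * Q = !![1, 1; 1, 1 + b] := by
  refine ⟨!![1, 0; 1, 1] * !![((u⁻¹ : Rˣ) : R), 0; 0, 1], !![1, 1; 0, 1], ?_, ?_, ?_⟩
  · simp [Matrix.isUnit_iff_isUnit_det, Matrix.det_fin_two_of]
  · simp [Matrix.isUnit_iff_isUnit_det, Matrix.det_fin_two_of]
  · ext i j; fin_cases i <;> fin_cases j <;> simp [Matrix.mul_apply, Fin.sum_univ_two]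

theorem stmt_0 {R : Type*} [CommRing R] (hR : IsElementaryDivisorRing R)
    (A : Matrix (Fin 2) (Fin 2) R) (hA : A.det ≠ 0) (hfull : A.IsFull) :
    ∃ P Q : Matrix (Fin 2) (Fin 2) R, IsUnit P ∧ IsUnit Q ∧
      IsNontrivialClearElem (P * A * Q) := by
  have : Nontrivial R := nontrivial_of_ne _ _ hA
  obtain ⟨P, Q, hP, hQ, hdiag, hdiv⟩ := hR 2 2 A
  obtain ⟨a, b, hD, hab⟩ : ∃ a b : R, P * A * Q = !![a, 0; 0, b] ∧ a ∣ b :=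
    ⟨(P * A * Q) 0 0, (P * A * Q) 1 1,
      (P * A * Q).eta_fin_two.trans (by rw [hdiag 0 1 (by decide), hdiag 1 0 (by decide)]),
      hdiv 0 (by omega) (by omega) (by omega) (by omega)⟩
  have hfullD := hfull.isUnit_mul_mul hP hQ
  rw [hD] at hfullD
  obtain ⟨u, rfl⟩ : IsUnit a :=
    hfullD.isUnit_of_dvd fun i j => by fin_cases i <;> fin_cases j <;> simp [hab]
  obtain ⟨P', Q', hP', hQ', hPQ'⟩ := exists_isUnit_mul_diagonal_mul_eq u b
  refine ⟨P' * P, Q * Q', hP'.mul hP, hQ.mul hQ', ?_⟩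
  have hreduce : P' * P * A * (Q * Q') = !![1, 1; 1, 1 + b] := by
    rw [← hPQ', ← hD]
    simp only [mul_assoc]
  exact hreduce ▸ isNontrivialClearElem_one_one_one_add b
end

section
/- Let R be a commutative elementary divisor ring. Then every full nonsingular 2×2 matrix A over R (i.e. det A ≠ 0 and the two-sided ideal of R^{2×2} generated by A is all of R^{2×2}) is a nontrivial clear element of the ring R^{2×2}: A = r + u where u is a unit of R^{2×2} and r is a unit-regular element of R^{2×2} with r ≠ 0 and r not a unit. -/
namespace Matrix.IsFull

variable {R : Type*} {n : ℕ}

theorem units_mul_mul [Ring R] {A : Matrix (Fin n) (Fin n) R} (hA : A.IsFull)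
    (P Q : (Matrix (Fin n) (Fin n) R)ˣ) : (P.val * A * Q.val).IsFull := by
  rw [Matrix.IsFull, eq_top_iff, ← hA, TwoSidedIdeal.span_le, Set.singleton_subset_iff]
  have hPAQ : P.val * A * Q.val ∈ TwoSidedIdeal.span {P.val * A * Q.val} :=
    TwoSidedIdeal.subset_span rfl
  have hcancel : P⁻¹.val * (P.val * A * Q.val) * Q⁻¹.val = A := by simp [mul_assoc]
  have hmem :=
    TwoSidedIdeal.mul_mem_right _ _ Q⁻¹.val (TwoSidedIdeal.mul_mem_left _ P⁻¹.val _ hPAQ)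
  rwa [hcancel] at hmem

theorem eq_top_of_forall_mem [Ring R] [NeZero n] {A : Matrix (Fin n) (Fin n) R} (hA : A.IsFull)
    {I : TwoSidedIdeal R} (h : ∀ i j, A i j ∈ I) : I = ⊤ := by
  have hle : TwoSidedIdeal.span {A} ≤ I.matrix (Fin n) := by
    rw [TwoSidedIdeal.span_le, Set.singleton_subset_iff]
    exact h
  rw [hA, top_le_iff] at hle
  have h1 : (1 : Matrix (Fin n) (Fin n) R) ∈ I.matrix (Fin n) := hle ▸ trivial
  rw [← TwoSidedIdeal.one_mem_iff]
  simpa using (TwoSidedIdeal.mem_matrix _ _ _).1 h1 0 0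

theorem isUnit_of_forall_dvd [CommRing R] [NeZero n] {A : Matrix (Fin n) (Fin n) R}
    (hA : A.IsFull) {d : R} (h : ∀ i j, d ∣ A i j) : IsUnit d := by
  have htop := hA.eq_top_of_forall_mem (I := (Ideal.span {d}).toTwoSided) fun i j => by
    simpa [Ideal.mem_span_singleton] using h i j
  have h1 : (1 : R) ∈ (Ideal.span {d}).toTwoSided := htop ▸ trivial
  rw [Ideal.mem_toTwoSided, Ideal.mem_span_singleton] at h1
  exact isUnit_of_dvd_one h1

end Matrix.IsFull

section UnitsMulMul

variable {S : Type*} [Ring S]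

theorem IsUnitRegular.units_mul_mul {r : S} (hr : IsUnitRegular r) (u v : Sˣ) :
    IsUnitRegular (↑u * r * ↑v) := by
  obtain ⟨w, hw, hrw⟩ := hr
  refine ⟨↑v⁻¹ * w * ↑u⁻¹, (v⁻¹.isUnit.mul hw).mul u⁻¹.isUnit, ?_⟩
  calc ↑u * r * ↑v * (↑v⁻¹ * w * ↑u⁻¹) * (↑u * r * ↑v)
      = ↑u * (r * w * r) * ↑v := by simp [mul_assoc]
    _ = ↑u * r * ↑v := by rw [hrw]

theorem IsNontrivialClearElem.units_mul_mul {a : S} (ha : IsNontrivialClearElem a) (u v : Sˣ) :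
    IsNontrivialClearElem (↑u * a * ↑v) := by
  obtain ⟨r, w, hr, hw, rfl, hr0, hru⟩ := ha
  refine ⟨↑u * r * ↑v, ↑u * w * ↑v, hr.units_mul_mul u v, (u.isUnit.mul hw).mul v.isUnit,
    by noncomm_ring, ?_, ?_⟩
  · simpa [mul_assoc] using hr0
  · rwa [mul_assoc, Units.isUnit_units_mul, Units.isUnit_mul_units]

end UnitsMulMul

theorem isNontrivialClearElem_diagonal_fin_two {R : Type*} [CommRing R] [Nontrivial R] {a : R}
    (ha : IsUnit a) (b : R) : IsNontrivialClearElem !![a, 0; 0, b] := by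
  refine ⟨!![0, 0; 1, b - a], !![a, 0; -1, a], ⟨!![0, 1; 1, 0], ?_, ?_⟩, ?_, ?_, ?_, ?_⟩
  · simp [Matrix.isUnit_iff_isUnit_det, Matrix.det_fin_two_of]
  · rw [Matrix.mul_fin_two, Matrix.mul_fin_two]
    simp
  · simpa [Matrix.isUnit_iff_isUnit_det, Matrix.det_fin_two_of] using ha.mul ha
  · simp [Matrix.of_add_of]
  · simp [← Matrix.ext_iff, Fin.forall_fin_two]
  · simp [Matrix.isUnit_iff_isUnit_det, Matrix.det_fin_two_of]

theorem stmt_1 {R : Type*} [CommRing R] (hR : IsElementaryDivisorRing R)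
    (A : Matrix (Fin 2) (Fin 2) R) (hA : A.det ≠ 0) (hfull : A.IsFull) :
    IsNontrivialClearElem A := by
  have : Nontrivial R := nontrivial_of_ne _ _ hA
  obtain ⟨-, -, ⟨P, rfl⟩, ⟨Q, rfl⟩, hdiag, hdvd⟩ := hR 2 2 A
  generalize hD : P.val * A * Q.val = D at hdiag hdvd
  have h01 : D 0 1 = 0 := hdiag 0 1 (by decide)
  have h10 : D 1 0 = 0 := hdiag 1 0 (by decide)
  have h0011 : D 0 0 ∣ D 1 1 := hdvd 0 (by decide) (by decide) (by decide) (by decide)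
  have hDfull : D.IsFull := hD ▸ hfull.units_mul_mul P Q
  have hunit : IsUnit (D 0 0) := hDfull.isUnit_of_forall_dvd fun i j => by
    fin_cases i <;> fin_cases j <;> simp [h01, h10, h0011]
  have hA_eq : A = P⁻¹.val * !![D 0 0, 0; 0, D 1 1] * Q⁻¹.val := by
    have hD_eq : D = !![D 0 0, 0; 0, D 1 1] := (Matrix.eta_fin_two D).trans (by rw [h01, h10])
    rw [← hD_eq, ← hD]
    simp [mul_assoc]
  rw [hA_eq]
  exact (isNontrivialClearElem_diagonal_fin_two hunit _).units_mul_mul _ _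
end

section
/- Let R be an associative ring with identity. Every unit-regular element of R is clear: if a = a·u·a for some unit u of R, then a = r + v for some unit-regular element r of R and some unit v of R. -/
theorem Units.sub_inv_mul_neg_mul_sub_inv {R : Type*} [Ring R] (u : Rˣ) {a : R}
    (h : a * u * a = a) :
    (a - ↑u⁻¹) * -↑u * (a - ↑u⁻¹) = a - ↑u⁻¹ := by
  simp only [mul_neg, neg_mul, sub_mul, mul_sub, Units.mul_inv, Units.inv_mul, mul_one,
    one_mul, mul_assoc] at h ⊢
  rw [h]
  abel

theorem IsUnitRegular.sub_inv {R : Type*} [Ring R] (u : Rˣ) {a : R} (h : a * u * a = a) :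
    IsUnitRegular (a - ↑u⁻¹) :=
  ⟨-↑u, u.isUnit.neg, u.sub_inv_mul_neg_mul_sub_inv h⟩

theorem stmt_4 {R : Type*} [Ring R] (a : R) (h : IsUnitRegular a) :
    IsClearElem a := by
  obtain ⟨_, ⟨u, rfl⟩, hau⟩ := h
  exact ⟨a - ↑u⁻¹, ↑u⁻¹, .sub_inv u hau, u⁻¹.isUnit, (sub_add_cancel a _).symm⟩
end

section
/- Let R and S be rings and let f : R → S be a surjective ring homomorphism. If R is a clear ring then S is a clear ring. -/
theorem IsUnitRegular.map {R S F : Type*} [Ring R] [Ring S] [FunLike F R S]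
    [MonoidHomClass F R S] (f : F) {r : R} (h : IsUnitRegular r) : IsUnitRegular (f r) := by
  obtain ⟨u, hu, hru⟩ := h
  exact ⟨f u, hu.map f, by rw [← map_mul, ← map_mul, hru]⟩

theorem IsClearElem.map {R S F : Type*} [Ring R] [Ring S] [FunLike F R S]
    [RingHomClass F R S] (f : F) {a : R} (h : IsClearElem a) : IsClearElem (f a) := by
  obtain ⟨r, u, hr, hu, rfl⟩ := h
  exact ⟨f r, f u, hr.map f, hu.map f, map_add f r u⟩

theorem IsClearRing.of_surjective {R S F : Type*} [Ring R] [Ring S] [FunLike F R S]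
    [RingHomClass F R S] (f : F) (hf : Function.Surjective f) (hR : IsClearRing R) :
    IsClearRing S := by
  intro a
  obtain ⟨b, rfl⟩ := hf a
  exact (hR b).map f

theorem stmt_5 {R S : Type*} [Ring R] [Ring S] (f : R →+* S)
    (hf : Function.Surjective f) (hR : IsClearRing R) : IsClearRing S :=
  hR.of_surjective f hf
end

section
/- Let (R_i)_{i ∈ I} be a family of rings. If every R_i is a clear ring, then the direct product Π_{i ∈ I} R_i is a clear ring. -/
section Pi

variable {I : Type*} {R : I → Type*} [∀ i, Ring (R i)]

theorem IsUnitRegular.pi {r : ∀ i, R i} (hr : ∀ i, IsUnitRegular (r i)) : IsUnitRegular r := by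
  choose u hu hru using hr
  exact ⟨u, Pi.isUnit_iff.mpr hu, funext hru⟩

theorem IsClearElem.pi {a : ∀ i, R i} (ha : ∀ i, IsClearElem (a i)) : IsClearElem a := by
  choose r u hr hu hau using ha
  exact ⟨r, u, .pi hr, Pi.isUnit_iff.mpr hu, funext hau⟩

end Pi

theorem stmt_6 {I : Type*} (R : I → Type*) [∀ i, Ring (R i)]
    (h : ∀ i, IsClearRing (R i)) : IsClearRing (∀ i, R i) :=
  fun a => .pi fun i => h i (a i)
end

section
/- Let R be a ring of unit-regular stable range 1, i.e. for all a, b ∈ R with aR + bR = R there exists a unit-regular element r of R such that a + b·r is a unit of R. Then R is a clear ring. -/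
/-- A ring has unit-regular stable range 1 if whenever `aR + bR = R` there is a
unit-regular `r` with `a + b * r` a unit. -/
def HasUnitRegularStableRange1 (R : Type*) [Ring R] : Prop :=
  ∀ a b : R, (∃ x y : R, a * x + b * y = 1) →
    ∃ r : R, IsUnitRegular r ∧ IsUnit (a + b * r)

theorem stmt_8 {R : Type*} [Ring R] (h : HasUnitRegularStableRange1 R) :
    IsClearRing R := by
  intro a
  -- `a` and `-1` are right comaximal, so `a - r` is a unit for some unit-regular `r`.
  obtain ⟨r, hr, hu⟩ := h a (-1) ⟨0, -1, by noncomm_ring⟩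
  rw [neg_one_mul, ← sub_eq_add_neg] at hu
  exact ⟨r, a - r, hr, hu, (add_sub_cancel r a).symm⟩
end

section
/- Let R be a commutative ring. Every clear element of R is 2-clean: if a = r + u with r unit-regular and u a unit of R, then a = e + v + w where e is an idempotent of R and v, w are units of R. Consequently every commutative clear ring is 2-clean. -/
/-- An element is 2-clean if it is the sum of an idempotent and two units. -/
def Is2CleanElem {R : Type*} [Ring R] (a : R) : Prop :=
  ∃ e u v : R, IsIdempotentElem e ∧ IsUnit u ∧ IsUnit v ∧ a = e + u + v

/-- A ring is 2-clean if every element is 2-clean. -/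
def Is2CleanRing (R : Type*) [Ring R] : Prop :=
  ∀ a : R, Is2CleanElem a

/-! If `r = r x r`, then `f = r x` is idempotent, and in a commutative ring `r - (1 - f)` is a
unit: on the corner `f` it acts as `r`, with inverse `x f`, and on the corner `1 - f` as `-1`,
because `r (1 - f) = 0`. Hence `r + u = (1 - f) + (r - (1 - f)) + u` for every unit `u`. -/

theorem isIdempotentElem_mul_of_mul_mul_eq_self {M : Type*} [Semigroup M] {r x : M}
    (h : r * x * r = r) : IsIdempotentElem (r * x) := by
  rw [IsIdempotentElem, ← mul_assoc, h]

theorem isUnit_sub_one_sub_mul_of_mul_mul_eq_self {R : Type*} [CommRing R] {r x : R}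
    (h : r * x * r = r) : IsUnit (r - (1 - r * x)) :=
  IsUnit.of_mul_eq_one (r * x * x - (1 - r * x)) <| by
    linear_combination (x ^ 2 + 2 * x + 1) * h

theorem IsClearElem.is2CleanElem {R : Type*} [CommRing R] {a : R} (ha : IsClearElem a) :
    Is2CleanElem a := by
  obtain ⟨r, u, ⟨x, -, hx⟩, hu, rfl⟩ := ha
  exact ⟨1 - r * x, r - (1 - r * x), u, (isIdempotentElem_mul_of_mul_mul_eq_self hx).one_sub,
    isUnit_sub_one_sub_mul_of_mul_mul_eq_self hx, hu, by ring⟩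

theorem stmt_9 {R : Type*} [CommRing R] :
    (∀ a : R, IsClearElem a → Is2CleanElem a) ∧
      (IsClearRing R → Is2CleanRing R) :=
  ⟨fun _ ha => ha.is2CleanElem, fun hR a => (hR a).is2CleanElem⟩
end

section
/- Let R be an associative ring with identity. The following are equivalent: (1) R is a clear ring and R has no nontrivial idempotents (its only idempotents are 0 and 1); (2) R has no nontrivial idempotents and every element a ∈ R is either a unit of R or 2-good (a sum of two units of R). -/
/-! If `r = r * u * r` with `u` a unit, then `r * u` is idempotent, and `r * u = 0` forces `r = 0`
while `r * u = 1` makes `r` a unit. So without nontrivial idempotents the unit-regular summand of a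
clear element is `0` or a unit, and units are trivially unit-regular. -/

section

variable {R : Type*} [Ring R]

def IsTwoGood (a : R) : Prop :=
  ∃ u v : R, IsUnit u ∧ IsUnit v ∧ a = u + v

theorem IsUnit.isUnitRegular {r : R} (hr : IsUnit r) : IsUnitRegular r :=
  ⟨↑hr.unit⁻¹, hr.unit⁻¹.isUnit, by rw [hr.mul_val_inv, one_mul]⟩

theorem isUnitRegular_zero : IsUnitRegular (0 : R) :=
  ⟨1, isUnit_one, by rw [zero_mul, zero_mul]⟩

theorem IsUnit.isClearElem {a : R} (ha : IsUnit a) : IsClearElem a :=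
  ⟨0, a, isUnitRegular_zero, ha, (zero_add a).symm⟩

theorem IsTwoGood.isClearElem {a : R} (ha : IsTwoGood a) : IsClearElem a :=
  let ⟨u, v, hu, hv, hsum⟩ := ha
  ⟨u, v, hu.isUnitRegular, hv, hsum⟩

theorem IsUnitRegular.eq_zero_or_isUnit
    (hid : ∀ e : R, IsIdempotentElem e → e = 0 ∨ e = 1) {r : R} (hr : IsUnitRegular r) :
    r = 0 ∨ IsUnit r := by
  obtain ⟨u, hu, hrur⟩ := hr
  have hidem : IsIdempotentElem (r * u) := by
    rw [IsIdempotentElem, ← mul_assoc, hrur]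
  rcases hid _ hidem with hzero | hone
  · left
    rw [← hrur, hzero, zero_mul]
  · right
    exact hu.mul_right_iff.mp (hone ▸ isUnit_one)

theorem IsClearElem.isUnit_or_isTwoGood
    (hid : ∀ e : R, IsIdempotentElem e → e = 0 ∨ e = 1) {a : R} (ha : IsClearElem a) :
    IsUnit a ∨ IsTwoGood a := by
  obtain ⟨r, u, hr, hu, rfl⟩ := ha
  rcases hr.eq_zero_or_isUnit hid with rfl | hr'
  · left
    rwa [zero_add]
  · exact Or.inr ⟨r, u, hr', hu, rfl⟩

end

theorem stmt_11 {R : Type*} [Ring R] :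
    (IsClearRing R ∧ ∀ e : R, IsIdempotentElem e → e = 0 ∨ e = 1) ↔
      ((∀ e : R, IsIdempotentElem e → e = 0 ∨ e = 1) ∧
        ∀ a : R, IsUnit a ∨ ∃ u v : R, IsUnit u ∧ IsUnit v ∧ a = u + v) := by
  constructor
  · rintro ⟨hclear, hid⟩
    exact ⟨hid, fun a => (hclear a).isUnit_or_isTwoGood hid⟩
  · rintro ⟨hid, hunit_or_twoGood⟩
    exact ⟨fun a => (hunit_or_twoGood a).elim IsUnit.isClearElem IsTwoGood.isClearElem, hid⟩
end

section
/- Let R be a commutative principal ideal domain. Then every full 2×2 matrix A over R (i.e. the two-sided ideal of R^{2×2} generated by A is all of R^{2×2}) is a clear element of the matrix ring R^{2×2}: A = r + u where r is a unit-regular element and u is a unit of R^{2×2}. -/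
/-!
Over a commutative ring, `A` is full exactly when its entries have no common non-unit divisor.
Over a PID this lets one find vectors `x`, `y` with `x ⬝ᵥ A *ᵥ y = 1`: after a Bézout row
operation `A` becomes upper triangular `!![g, B; 0, D]` with `g ≠ 0`, and `B + t * D` is made
coprime to `g` by taking for `t` the product of the prime factors of `g` not dividing `B`.
Completing `x` and `y` to invertible matrices shows that `A` is equivalent to a matrix with
corner entry `1`, and such a matrix is a sum of two invertible matrices; clearness is invariant
under multiplication by units on both sides.
-/

theorem IsUnit.isUnitRegular_s13 {S : Type*} [Ring S] {r : S} (h : IsUnit r) : IsUnitRegular r := by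
  obtain ⟨w, rfl⟩ := h
  exact ⟨↑w⁻¹, w⁻¹.isUnit, by simp⟩

theorem IsUnitRegular.units_mul_mul_s13 {S : Type*} [Ring S] {r : S} (h : IsUnitRegular r)
    (P Q : Sˣ) : IsUnitRegular (↑P * r * ↑Q) := by
  obtain ⟨u, hu, hr⟩ := h
  refine ⟨↑Q⁻¹ * u * ↑P⁻¹, (Q⁻¹.isUnit.mul hu).mul P⁻¹.isUnit, ?_⟩
  calc ↑P * r * ↑Q * (↑Q⁻¹ * u * ↑P⁻¹) * (↑P * r * ↑Q) = ↑P * (r * u * r) * ↑Q := by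
        simp only [mul_assoc, Units.mul_inv_cancel_left, Units.inv_mul_cancel_left]
    _ = ↑P * r * ↑Q := by rw [hr, mul_assoc]

theorem IsClearElem.units_mul_mul_s13 {S : Type*} [Ring S] {a : S} (h : IsClearElem a)
    (P Q : Sˣ) : IsClearElem (↑P * a * ↑Q) := by
  obtain ⟨r, u, hr, hu, rfl⟩ := h
  exact ⟨↑P * r * ↑Q, ↑P * u * ↑Q, hr.units_mul_mul_s13 P Q, (P.isUnit.mul hu).mul Q.isUnit,
    by rw [mul_add, add_mul]⟩

namespace Matrix

variable {R : Type*} [CommRing R]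

theorem IsFull.isUnit_of_forall_dvd_s13 {n : ℕ} [NeZero n]
    {A : Matrix (Fin n) (Fin n) R} (hA : A.IsFull) {z : R} (hz : ∀ i j, z ∣ A i j) :
    IsUnit z := by
  let J := (Ideal.span {z}).toTwoSided
  have hAJ : A ∈ J.matrix (Fin n) := fun i j =>
    Ideal.mem_toTwoSided.2 (Ideal.mem_span_singleton.2 (hz i j))
  have hJ : J.matrix (Fin n) = ⊤ :=
    top_unique (hA ▸ TwoSidedIdeal.span_le.2 (Set.singleton_subset_iff.2 hAJ))
  have h1 : (1 : R) ∈ J := by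
    have h1J : (1 : Matrix (Fin n) (Fin n) R) ∈ J.matrix (Fin n) := hJ ▸ trivial
    simpa using (TwoSidedIdeal.mem_matrix _ _ _).1 h1J 0 0
  exact isUnit_of_dvd_one (Ideal.mem_span_singleton.1 (Ideal.mem_toTwoSided.1 h1))

theorem isClearElem_of_apply_zero_zero_eq_one {M : Matrix (Fin 2) (Fin 2) R} (h : M 0 0 = 1) :
    IsClearElem M := by
  set b := M 0 1 + 1
  set c := M 1 0 + 1
  -- both summands have determinant `-1`
  refine ⟨!![1, b; c, b * c - 1], !![0, -1; -1, M 1 1 - (b * c - 1)], ?_, ?_, ?_⟩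
  · refine IsUnit.isUnitRegular_s13 ((isUnit_iff_isUnit_det _).2 ?_)
    rw [det_fin_two_of]
    exact ⟨-1, by simp⟩
  · rw [isUnit_iff_isUnit_det, det_fin_two_of]
    exact ⟨-1, by simp⟩
  · rw [eta_fin_two M, h]
    ext i j; fin_cases i <;> fin_cases j <;> simp [b, c]

theorem isClearElem_of_dotProduct_mulVec_eq_one {A : Matrix (Fin 2) (Fin 2) R} (x y : Fin 2 → R)
    (h : x ⬝ᵥ A *ᵥ y = 1) : IsClearElem A := by
  have hw : (x ᵥ* A) ⬝ᵥ y = 1 := by rwa [← dotProduct_mulVec]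
  set v := A *ᵥ y
  set w := x ᵥ* A
  simp only [dotProduct, Fin.sum_univ_two] at h hw
  -- `h` makes `x` and `y` unimodular, so they complete to invertible `P` and `Q`
  let P : Matrix (Fin 2) (Fin 2) R := !![x 0, x 1; -v 1, v 0]
  let Q : Matrix (Fin 2) (Fin 2) R := !![y 0, -w 1; y 1, w 0]
  obtain ⟨P', hP'⟩ : IsUnit P :=
    (isUnit_iff_isUnit_det P).2 ⟨1, by simp [P, det_fin_two_of]; linear_combination -h⟩
  obtain ⟨Q', hQ'⟩ : IsUnit Q :=
    (isUnit_iff_isUnit_det Q).2 ⟨1, by simp [Q, det_fin_two_of]; linear_combination -hw⟩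
  have hPAQ : (P * A * Q) 0 0 = 1 := by
    simp [P, Q, v, w, mul_apply, Fin.sum_univ_two, vecMul, dotProduct] at h ⊢
    linear_combination h
  convert (isClearElem_of_apply_zero_zero_eq_one hPAQ).units_mul_mul_s13 P'⁻¹ Q'⁻¹ using 1
  rw [← hP', ← hQ']
  simp [mul_assoc]

end Matrix

open UniqueFactorizationMonoid in
theorem exists_isCoprime_add_mul {R : Type*} [CommRing R] [IsDomain R] [IsPrincipalIdealRing R]
    {g b d : R} (hg : g ≠ 0) (h : ∀ z, z ∣ g → z ∣ b → z ∣ d → IsUnit z) :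
    ∃ t, IsCoprime g (b + t * d) := by
  classical
  -- every prime factor of `g` divides exactly one of `b` and `t`
  let t := ((factors g).filter (¬ · ∣ b)).prod
  refine ⟨t, isCoprime_of_prime_dvd (fun h0 => hg h0.1) fun p hp hpg hpbt => ?_⟩
  by_cases hpb : p ∣ b
  · have hpt : ¬ p ∣ t := by
      intro hpt
      obtain ⟨q, hq, hpq⟩ := hp.exists_mem_multiset_dvd hpt
      obtain ⟨hqg, hqb⟩ := Multiset.mem_filter.1 hq
      exact hqb ((hp.irreducible.associated_of_dvd (irreducible_of_factor q hqg) hpq).dvd'.trans hpb)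
    have hpd : p ∣ d := (hp.dvd_mul.1 ((dvd_add_right hpb).1 hpbt)).resolve_left hpt
    exact hp.not_isUnit (h p hpg hpb hpd)
  · have hpt : p ∣ t := by
      obtain ⟨q, hq, hpq⟩ := exists_mem_factors_of_dvd hg hp.irreducible hpg
      exact hpq.dvd.trans
        (Multiset.dvd_prod (Multiset.mem_filter.2 ⟨hq, fun hqb => hpb (hpq.dvd.trans hqb)⟩))
    exact hpb ((dvd_add_left (hpt.mul_right d)).1 hpbt)

namespace Matrix

variable {R : Type*} [CommRing R] [IsDomain R] [IsPrincipalIdealRing R]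

theorem exists_isCoprime_vecMul_of_col_ne_zero {A : Matrix (Fin 2) (Fin 2) R}
    (hA : ∀ z, (∀ i j, z ∣ A i j) → IsUnit z) (hcol : ¬(A 0 0 = 0 ∧ A 1 0 = 0)) :
    ∃ x : Fin 2 → R, IsCoprime ((x ᵥ* A) 0) ((x ᵥ* A) 1) := by
  obtain ⟨g, a, c, p, q, ha, hc, hpq⟩ :
      ∃ g a c p q : R, A 0 0 = g * a ∧ A 1 0 = g * c ∧ p * A 0 0 + q * A 1 0 = g := by
    obtain ⟨a, ha⟩ := IsBezout.gcd_dvd_left (A 0 0) (A 1 0)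
    obtain ⟨c, hc⟩ := IsBezout.gcd_dvd_right (A 0 0) (A 1 0)
    obtain ⟨p, q, hpq⟩ := IsBezout.gcd_eq_sum (A 0 0) (A 1 0)
    exact ⟨_, a, c, p, q, ha, hc, hpq⟩
  have hg : g ≠ 0 := fun hg => hcol ⟨by rw [ha, hg, zero_mul], by rw [hc, hg, zero_mul]⟩
  have hac : p * a + q * c = 1 :=
    mul_left_cancel₀ hg (by linear_combination hpq - p * ha - q * hc)
  -- `!![p, q; -c, a] * A = !![g, p * A 0 1 + q * A 1 1; 0, a * A 1 1 - c * A 0 1]`, `t` then acts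
  -- as an elementary row operation
  obtain ⟨t, ht⟩ := exists_isCoprime_add_mul (b := p * A 0 1 + q * A 1 1)
    (d := a * A 1 1 - c * A 0 1) hg fun z hzg hzB hzD => by
      refine hA z (Fin.forall_fin_two.2 ⟨Fin.forall_fin_two.2 ⟨?_, ?_⟩,
        Fin.forall_fin_two.2 ⟨?_, ?_⟩⟩)
      · exact ha ▸ hzg.mul_right a
      · convert dvd_sub (hzB.mul_left a) (hzD.mul_left q) using 1
        linear_combination -A 0 1 * hac
      · exact hc ▸ hzg.mul_right c
      · convert dvd_add (hzB.mul_left c) (hzD.mul_left p) using 1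
        linear_combination -A 1 1 * hac
  refine ⟨![p - t * c, q + t * a], ?_⟩
  convert ht using 1
  · simp [vecMul, dotProduct, Fin.sum_univ_two]
    linear_combination hpq + t * a * hc - t * c * ha
  · simp [vecMul, dotProduct, Fin.sum_univ_two]
    ring

theorem exists_dotProduct_mulVec_eq_one {A : Matrix (Fin 2) (Fin 2) R}
    (hA : ∀ z, (∀ i j, z ∣ A i j) → IsUnit z) : ∃ x y : Fin 2 → R, x ⬝ᵥ A *ᵥ y = 1 := by
  suffices ∃ x : Fin 2 → R, IsCoprime ((x ᵥ* A) 0) ((x ᵥ* A) 1) by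
    obtain ⟨x, u, v, huv⟩ := this
    refine ⟨x, ![u, v], ?_⟩
    rw [dotProduct_mulVec, ← huv]
    simp [dotProduct, Fin.sum_univ_two, mul_comm]
  by_cases hcol : A 0 0 = 0 ∧ A 1 0 = 0
  · obtain ⟨α, β, hαβ⟩ : IsCoprime (A 0 1) (A 1 1) := IsRelPrime.isCoprime fun z h01 h11 =>
      hA z (Fin.forall_fin_two.2 ⟨Fin.forall_fin_two.2 ⟨by simp [hcol.1], h01⟩,
        Fin.forall_fin_two.2 ⟨by simp [hcol.2], h11⟩⟩)
    refine ⟨![α, β], ?_⟩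
    simpa [vecMul, dotProduct, Fin.sum_univ_two, hcol, hαβ] using isCoprime_one_right
  · exact exists_isCoprime_vecMul_of_col_ne_zero hA hcol

end Matrix

theorem stmt_13 {R : Type*} [CommRing R] [IsDomain R] [IsPrincipalIdealRing R]
    (A : Matrix (Fin 2) (Fin 2) R) (hfull : A.IsFull) :
    IsClearElem A := by
  obtain ⟨x, y, h⟩ := Matrix.exists_dotProduct_mulVec_eq_one fun _ => hfull.isUnit_of_forall_dvd_s13
  exact Matrix.isClearElem_of_dotProduct_mulVec_eq_one x y h
end

section
/- Let R be an associative ring with identity in which 2 is a unit. Then every unit-regular element of R is the sum of two units of R. -/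
/-!
A unit-regular element is `e * v` with `e` idempotent and `v` a unit. Since `2 * e - 1` is an
involution, `e = 2⁻¹ * (2 * e - 1) + 2⁻¹` is a sum of two units, and multiplying on the right by
`v` preserves this.
-/

section

variable {R : Type*} [Ring R]

theorem IsIdempotentElem.two_mul_sub_one_mul_self {e : R} (he : IsIdempotentElem e) :
    (2 * e - 1) * (2 * e - 1) = 1 := by
  have expand : (2 * e - 1) * (2 * e - 1) = 4 * (e * e) - 4 * e + 1 := by noncomm_ring
  rw [expand, he.eq, sub_self, zero_add]

theorem IsIdempotentElem.isUnit_two_mul_sub_one {e : R} (he : IsIdempotentElem e) :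
    IsUnit (2 * e - 1) :=
  ⟨⟨_, _, he.two_mul_sub_one_mul_self, he.two_mul_sub_one_mul_self⟩, rfl⟩

theorem IsIdempotentElem.exists_isUnit_add_isUnit {e : R} (he : IsIdempotentElem e)
    (h2 : IsUnit (2 : R)) : ∃ u v : R, IsUnit u ∧ IsUnit v ∧ e = u + v := by
  set half : R := ↑h2.unit⁻¹
  have half_isUnit : IsUnit half := h2.unit⁻¹.isUnit
  refine ⟨half * (2 * e - 1), half, half_isUnit.mul he.isUnit_two_mul_sub_one, half_isUnit, ?_⟩
  calc e = half * 2 * e := by rw [h2.val_inv_mul, one_mul]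
    _ = half * (2 * e - 1) + half := by noncomm_ring

theorem IsUnitRegular.exists_eq_mul_isUnit {a : R} (ha : IsUnitRegular a) :
    ∃ e v : R, IsIdempotentElem e ∧ IsUnit v ∧ a = e * v := by
  obtain ⟨u, hu, hau⟩ := ha
  refine ⟨a * u, ↑hu.unit⁻¹, ?_, hu.unit⁻¹.isUnit, ?_⟩
  · rw [IsIdempotentElem, ← mul_assoc, hau]
  · rw [mul_assoc, hu.mul_val_inv, mul_one]

end

theorem stmt_15 {R : Type*} [Ring R] (h2 : IsUnit (2 : R))
    (a : R) (ha : IsUnitRegular a) :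
    ∃ u v : R, IsUnit u ∧ IsUnit v ∧ a = u + v := by
  obtain ⟨e, v, he, hv, rfl⟩ := ha.exists_eq_mul_isUnit
  obtain ⟨u, w, hu, hw, rfl⟩ := he.exists_isUnit_add_isUnit h2
  exact ⟨u * v, w * v, hu.mul hv, hw.mul hv, add_mul u w v⟩
end
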